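/- Let D ⊆ ℂ^m be a bounded domain and let (d_G)_G be a family of functions d_G : G×G → [0,∞), indexed by domains G ⊆ ℂ^m, which is antitone with respect to inclusion, i.e. whenever G ⊆ G' are domains in ℂ^m, then d_{G'}(z,w) ≤ d_G(z,w) for all z, w ∈ G. Assume there exist sequences (E_n) and (I_n) of domains in ℂ^m such that E_{n+1} ⋐ E_n for all n and ⋂_n E_n = closure(D), and I_n ⋐ I_{n+1} for all n and ⋃_n I_n = D, and such that for every z, w ∈ D one has lim_{n→∞} d_{E_n}(z,w) = lim_{n→∞} d_{I_n}(z,w) = d_D(z,w). Let (D_n) be a sequence of bounded domains in ℂ^m such that the Hausdorff distance 𝔥(closure(D_n), closure(D)) tends to 0 as n → ∞, and such that for each compact set K ⊆ D there exists n₀ with K ⊆ D_n for all n ≥ n₀. Then for every z, w ∈ D, lim_{n→∞} d_{D_n}(z,w) = d_D(z,w). -/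

import Mathlib

open Complex Metric Filter Bornology

noncomputable section

/-- `ℂⁿ` with the Euclidean norm. -/
abbrev Cn (n : ℕ) := EuclideanSpace ℂ (Fin n)

/-- A domain: a nonempty connected open set. -/
def IsCDomain {n : ℕ} (D : Set (Cn n)) : Prop := IsOpen D ∧ IsConnected D

/-- `A ⋐ B`: the closure of `A` is compact and contained in `B`. -/
def CpSub {n : ℕ} (A B : Set (Cn n)) : Prop := IsCompact (closure A) ∧ closure A ⊆ B

/-- The inverse hyperbolic tangent. -/
def arctanh (t : ℝ) : ℝ := (1 / 2) * Real.log ((1 + t) / (1 - t))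

/-- The Poincaré (hyperbolic) distance on the unit disc:
`p(z,w) = arctanh (|z - w| / |1 - conj z * w|)`. -/
def poincare (z w : ℂ) : ℝ :=
  arctanh (‖z - w‖ / ‖1 - (starRingEnd ℂ) z * w‖)

open Topology

/-
`d_{D_n}(z,w)` is squeezed between `d_{E_k}(z,w)` and `d_{I_k}(z,w)`, both close to `d_D(z,w)`
for large `k`: a compact exhaustion step `closure (I k) ⊆ D` is eventually swallowed by `D_n`,
while `D_n` eventually lies in a thickening of the compact set `closure D` contained in the open
set `E k`, by Hausdorff convergence.
-/

theorem tendsto_of_squeeze_by_families {ι κ α : Type*} [LinearOrder α]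
    [TopologicalSpace α] [OrderTopology α] {l : Filter ι} {l' : Filter κ} [l'.NeBot]
    {f : ι → α} {a b : κ → α} {L : α} (ha : Tendsto a l' (𝓝 L)) (hb : Tendsto b l' (𝓝 L))
    (hlow : ∀ᶠ k in l', ∀ᶠ n in l, a k ≤ f n) (hup : ∀ᶠ k in l', ∀ᶠ n in l, f n ≤ b k) :
    Tendsto f l (𝓝 L) := by
  refine tendsto_order.2 ⟨fun u hu => ?_, fun u hu => ?_⟩
  · obtain ⟨k, hak, hk⟩ := ((tendsto_order.1 ha).1 u hu).and hlow |>.exists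
    exact hk.mono fun n hn => hak.trans_le hn
  · obtain ⟨k, hbk, hk⟩ := ((tendsto_order.1 hb).2 u hu).and hup |>.exists
    exact hk.mono fun n hn => hn.trans_lt hbk

theorem eventually_subset_thickening_of_tendsto_hausdorffDist {ι X : Type*}
    [PseudoMetricSpace X] {l : Filter ι} {A : ι → Set X} {K : Set X} (hKne : K.Nonempty)
    (hKb : IsBounded K) (hAb : ∀ n, IsBounded (A n))
    (hA : Tendsto (fun n => hausdorffDist (A n) K) l (𝓝 0)) {δ : ℝ} (hδ : 0 < δ) :
    ∀ᶠ n in l, A n ⊆ thickening δ K := by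
  filter_upwards [(tendsto_order.1 hA).2 δ hδ] with n hn x hx
  have hfin := hausdorffEDist_ne_top_of_nonempty_of_bounded ⟨x, hx⟩ hKne (hAb n) hKb
  obtain ⟨y, hy, hxy⟩ := exists_dist_lt_of_hausdorffDist_lt hx hn hfin
  exact mem_thickening_iff.2 ⟨y, hy, hxy⟩

theorem eventually_subset_of_tendsto_hausdorffDist {ι X : Type*} [PseudoMetricSpace X]
    {l : Filter ι} {A : ι → Set X} {K U : Set X} (hK : IsCompact K) (hKne : K.Nonempty)
    (hU : IsOpen U) (hKU : K ⊆ U) (hAb : ∀ n, IsBounded (A n))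
    (hA : Tendsto (fun n => hausdorffDist (A n) K) l (𝓝 0)) :
    ∀ᶠ n in l, A n ⊆ U := by
  obtain ⟨δ, hδ, hδU⟩ := hK.exists_thickening_subset_open hU hKU
  filter_upwards [eventually_subset_thickening_of_tendsto_hausdorffDist hKne hK.isBounded hAb
    hA hδ] with n hn using hn.trans hδU

theorem eventually_mem_of_monotone_of_mem_iUnion {X : Type*} {I : ℕ → Set X} (hI : Monotone I)
    {x : X} (hx : x ∈ ⋃ k, I k) : ∀ᶠ k in atTop, x ∈ I k := by
  obtain ⟨k₀, hk₀⟩ := Set.mem_iUnion.1 hx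
  filter_upwards [eventually_ge_atTop k₀] with k hk using hI hk hk₀

theorem antitone_family_hausdorff_convergence_general
    {m : ℕ} (d : Set (Cn m) → Cn m → Cn m → ℝ)
    (hanti : ∀ G G' : Set (Cn m), IsCDomain G → IsCDomain G' → G ⊆ G' →
      ∀ z ∈ G, ∀ w ∈ G, d G' z w ≤ d G z w)
    (D : Set (Cn m)) (hD : IsCDomain D) (hDb : IsBounded D)
    (E I : ℕ → Set (Cn m))
    (hEdom : ∀ n, IsCDomain (E n))
    (hEint : ⋂ n, E n = closure D)
    (hIdom : ∀ n, IsCDomain (I n)) (hIsub : ∀ n, CpSub (I n) (I (n + 1)))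
    (hIun : ⋃ n, I n = D)
    (hEconv : ∀ z ∈ D, ∀ w ∈ D, Tendsto (fun n => d (E n) z w) atTop (nhds (d D z w)))
    (hIconv : ∀ z ∈ D, ∀ w ∈ D, Tendsto (fun n => d (I n) z w) atTop (nhds (d D z w)))
    (Dn : ℕ → Set (Cn m))
    (hDn : ∀ n, IsCDomain (Dn n)) (hDnb : ∀ n, IsBounded (Dn n))
    (hH : Tendsto (fun n => hausdorffDist (closure (Dn n)) (closure D)) atTop (nhds 0))
    (hK : ∀ K : Set (Cn m), K ⊆ D → IsCompact K → ∃ n₀ : ℕ, ∀ n ≥ n₀, K ⊆ Dn n) :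
    ∀ z ∈ D, ∀ w ∈ D, Tendsto (fun n => d (Dn n) z w) atTop (nhds (d D z w)) := by
  intro z hz w hw
  have hIsubD (k : ℕ) : closure (I k) ⊆ D :=
    (hIsub k).2.trans (hIun ▸ Set.subset_iUnion I (k + 1))
  have hDn_ge_I (k : ℕ) : ∀ᶠ n in atTop, I k ⊆ Dn n := by
    obtain ⟨n₀, hn₀⟩ := hK _ (hIsubD k) (hIsub k).1
    exact eventually_atTop.2 ⟨n₀, fun n hn => subset_closure.trans (hn₀ n hn)⟩
  have hDn_le_E (k : ℕ) : ∀ᶠ n in atTop, Dn n ⊆ E k :=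
    (eventually_subset_of_tendsto_hausdorffDist hDb.isCompact_closure hD.2.nonempty.closure
      (hEdom k).1 (hEint.symm ▸ Set.iInter_subset E k) (fun n => (hDnb n).closure) hH).mono
      fun n hn => subset_closure.trans hn
  have hImono : Monotone I := monotone_nat_of_le_succ fun k => subset_closure.trans (hIsub k).2
  have hzwI : ∀ᶠ k in atTop, z ∈ I k ∧ w ∈ I k :=
    (eventually_mem_of_monotone_of_mem_iUnion hImono (hIun.symm ▸ hz)).and
      (eventually_mem_of_monotone_of_mem_iUnion hImono (hIun.symm ▸ hw))
  obtain ⟨k₀, hzI, hwI⟩ := hzwI.exists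
  have hzwDn : ∀ᶠ n in atTop, z ∈ Dn n ∧ w ∈ Dn n :=
    (hDn_ge_I k₀).mono fun n hn => ⟨hn hzI, hn hwI⟩
  refine tendsto_of_squeeze_by_families (hEconv z hz w hw) (hIconv z hz w hw)
    (Eventually.of_forall fun k => ?_) (hzwI.mono fun k ⟨hzk, hwk⟩ => ?_)
  · filter_upwards [hDn_le_E k, hzwDn] with n hn ⟨hzn, hwn⟩
    exact hanti _ _ (hDn n) (hEdom k) hn z hzn w hwn
  · filter_upwards [hDn_ge_I k] with n hn
    exact hanti _ _ (hIdom k) (hDn n) hn z hzk w hwk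

/-- Abstract core of the main theorem: let `d` be a family of nonnegative functions indexed
by domains in `ℂ^m` which is antitone with respect to inclusion of domains. If `d` converges
to `d_D` along a decreasing sequence `(E n)` of domains with `E (n+1) ⋐ E n`,
`⋂ n, E n = closure D`, and along an increasing sequence `(I n)` of domains with
`I n ⋐ I (n+1)`, `⋃ n, I n = D`, then `d` converges to `d_D` along any sequence of bounded
domains `(Dn n)` with `𝔥(closure (Dn n), closure D) → 0` eventually containing each compact
subset of `D`. -/
theorem antitone_family_hausdorff_convergence
    {m : ℕ} (d : Set (Cn m) → Cn m → Cn m → ℝ)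
    (hnonneg : ∀ G : Set (Cn m), IsCDomain G → ∀ z ∈ G, ∀ w ∈ G, 0 ≤ d G z w)
    (hanti : ∀ G G' : Set (Cn m), IsCDomain G → IsCDomain G' → G ⊆ G' →
      ∀ z ∈ G, ∀ w ∈ G, d G' z w ≤ d G z w)
    (D : Set (Cn m)) (hD : IsCDomain D) (hDb : IsBounded D)
    (E I : ℕ → Set (Cn m))
    (hEdom : ∀ n, IsCDomain (E n)) (hEsub : ∀ n, CpSub (E (n + 1)) (E n))
    (hEint : ⋂ n, E n = closure D)
    (hIdom : ∀ n, IsCDomain (I n)) (hIsub : ∀ n, CpSub (I n) (I (n + 1)))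
    (hIun : ⋃ n, I n = D)
    (hEconv : ∀ z ∈ D, ∀ w ∈ D, Tendsto (fun n => d (E n) z w) atTop (nhds (d D z w)))
    (hIconv : ∀ z ∈ D, ∀ w ∈ D, Tendsto (fun n => d (I n) z w) atTop (nhds (d D z w)))
    (Dn : ℕ → Set (Cn m))
    (hDn : ∀ n, IsCDomain (Dn n)) (hDnb : ∀ n, IsBounded (Dn n))
    (hH : Tendsto (fun n => hausdorffDist (closure (Dn n)) (closure D)) atTop (nhds 0))
    (hK : ∀ K : Set (Cn m), K ⊆ D → IsCompact K → ∃ n₀ : ℕ, ∀ n ≥ n₀, K ⊆ Dn n) :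
    ∀ z ∈ D, ∀ w ∈ D, Tendsto (fun n => d (Dn n) z w) atTop (nhds (d D z w)) :=
  antitone_family_hausdorff_convergence_general d hanti D hD hDb E I hEdom hEint hIdom hIsub hIun
    hEconv hIconv Dn hDn hDnb hH hK
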